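/- arXiv:2008.05990 — 2 statements merged into one kernel-verified Lean document; each statement's English description precedes it below -/
import Mathlib

section
/- Let V be a regular vine and let e ∈ E_k be an edge joining vertices v_1, v_2 ∈ V_k. Then the conditioning set D_e = U_{v_1} ∩ U_{v_2} has exactly k - 1 elements, and the conditioned sets a_e = U_{v_1} \ D_e and b_e = U_{v_2} \ D_e are singletons. Consequently U_e = {a_e} ∪ {b_e} ∪ D_e is a disjoint union. -/
open Finset

variable {α : Type*} [DecidableEq α] [Fintype α]

/-- The simple graph on `α` induced by a finite set of unordered pairs. -/
def graphOf (E : Finset (Sym2 α)) : SimpleGraph α where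
  Adj x y := x ≠ y ∧ s(x, y) ∈ E
  symm := ⟨by
    intro x y h
    refine ⟨h.1.symm, ?_⟩
    rw [Sym2.eq_swap]
    exact h.2⟩
  loopless := ⟨fun x h => h.1 rfl⟩

/-- `(V, E)` is a finite tree: edges join distinct vertices of `V`, the induced
graph is acyclic, and all vertices of `V` are mutually reachable. -/
def IsTreeOn (V : Finset α) (E : Finset (Sym2 α)) : Prop :=
  (∀ e ∈ E, ∀ x ∈ e, x ∈ V) ∧ (∀ e ∈ E, ¬ e.IsDiag) ∧
    (graphOf E).IsAcyclic ∧ ∀ x ∈ V, ∀ y ∈ V, (graphOf E).Reachable x y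

/-- Complete union of an edge: the union of the complete unions of its endpoints
(each vertex of a tree of the vine is identified with its complete union). -/
def eUnion (e : Sym2 (Finset α)) : Finset α :=
  Sym2.lift ⟨fun A B => A ∪ B, fun A B => union_comm A B⟩ e

/-- Conditioning set `D_e` of an edge. -/
def condSet (e : Sym2 (Finset α)) : Finset α :=
  Sym2.lift ⟨fun A B => A ∩ B, fun A B => inter_comm A B⟩ e

/-- Conditioned set `{a_e, b_e}` of an edge. -/
def condPair (e : Sym2 (Finset α)) : Finset α :=
  Sym2.lift ⟨fun A B => symmDiff A B, fun A B => symmDiff_comm A B⟩ e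

/-- A regular vine on a finite set `α` of `d = Fintype.card α` elements.  The
vertices of tree `k` (for `k = 1, …, d-1`) are identified with their complete
unions, subsets of `α`; `V (k+1) = E k` is expressed via complete unions. -/
structure RegularVine (α : Type*) [DecidableEq α] [Fintype α] where
  V : ℕ → Finset (Finset α)
  E : ℕ → Finset (Sym2 (Finset α))
  hV1 : V 1 = Finset.univ.image (fun a : α => ({a} : Finset α))
  hVsucc : ∀ k, 1 ≤ k → V (k + 1) = (E k).image eUnion
  tree : ∀ k, 1 ≤ k → k + 1 ≤ Fintype.card α → IsTreeOn (V k) (E k)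
  hEzero : ∀ k, k = 0 ∨ Fintype.card α ≤ k → E k = ∅
  proximity : ∀ k, 1 ≤ k → ∀ p ∈ E (k + 1),
    ∃ a ∈ E k, ∃ b ∈ E k, p = s(eUnion a, eUnion b) ∧ ∃ v, v ∈ a ∧ v ∈ b

/-- A tree `(V, E)` is a path: it is a tree and every vertex has degree at most 2. -/
def IsPathOn (V : Finset α) (E : Finset (Sym2 α)) : Prop :=
  IsTreeOn V E ∧ ∀ v ∈ V, (E.filter (fun e => v ∈ e)).card ≤ 2

/-- A permutation `(i_1, …, i_d) = (σ 0, …, σ (d-1))` is compatible with a vine on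
`Fin d`: for every `k` there is an edge of tree `k` with conditioned set
`{σ k, σ r}` (some `r < k`) and conditioning set `{σ 0, …, σ (k-1)} \ {σ r}`. -/
def Compatible {d : ℕ} (𝒱 : RegularVine (Fin d)) (σ : Fin d → Fin d) : Prop :=
  ∀ k : Fin d, 1 ≤ (k : ℕ) → ∃ r : Fin d, r < k ∧ ∃ e ∈ 𝒱.E (k : ℕ),
    condPair e = {σ k, σ r} ∧
    condSet e = ((Finset.univ.filter (fun s : Fin d => s < k)).image σ).erase (σ r)

/-!
Induction on the level `k`: vertices of tree `k` have `k` elements. The endpoints of an edge of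
tree `k` are distinct `k`-sets, so they meet in fewer than `k` elements, while by proximity both
contain a common vertex of tree `k - 1`, so they meet in at least `k - 1`. Hence the complete union
of the edge, a vertex of tree `k + 1`, has `k + 1` elements, and each endpoint exceeds the
conditioning set by exactly one element.
-/

theorem Finset.card_inter_lt_of_card_eq {β : Type*} [DecidableEq β] {s t : Finset β} {n : ℕ}
    (hs : s.card = n) (ht : t.card = n) (hst : s ≠ t) : (s ∩ t).card < n := by
  refine hs ▸ lt_of_le_of_ne (card_le_card inter_subset_left) fun h => hst ?_
  have hsub : s ⊆ t := inter_eq_left.mp (eq_of_subset_of_card_le inter_subset_left h.ge)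
  exact eq_of_subset_of_card_le hsub (by omega)

namespace RegularVine

variable (𝒱 : RegularVine α) {k : ℕ} {e : Sym2 (Finset α)}

theorem one_le_and_add_one_le_card_of_mem_E (he : e ∈ 𝒱.E k) :
    1 ≤ k ∧ k + 1 ≤ Fintype.card α := by
  by_contra h
  have hk : k = 0 ∨ Fintype.card α ≤ k := by omega
  simp [𝒱.hEzero k hk] at he

theorem isTreeOn_of_mem_E (he : e ∈ 𝒱.E k) : IsTreeOn (𝒱.V k) (𝒱.E k) :=
  𝒱.tree k (𝒱.one_le_and_add_one_le_card_of_mem_E he).1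
    (𝒱.one_le_and_add_one_le_card_of_mem_E he).2

theorem mem_V_of_mem_E {v : Finset α} (he : e ∈ 𝒱.E k) (hv : v ∈ e) : v ∈ 𝒱.V k :=
  (𝒱.isTreeOn_of_mem_E he).1 e he v hv

theorem ne_of_mk_mem_E {x y : Finset α} (he : s(x, y) ∈ 𝒱.E k) : x ≠ y :=
  Sym2.mk_isDiag_iff.not.mp ((𝒱.isTreeOn_of_mem_E he).2.1 _ he)

theorem card_eq_one_of_mem_V_one {u : Finset α} (hu : u ∈ 𝒱.V 1) : u.card = 1 := by
  rw [𝒱.hV1] at hu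
  obtain ⟨a, -, rfl⟩ := mem_image.mp hu
  exact card_singleton a

theorem card_condSet_lt (hV : ∀ u ∈ 𝒱.V k, u.card = k) (he : e ∈ 𝒱.E k) :
    (condSet e).card < k := by
  induction e using Sym2.ind with
  | _ x y =>
    exact card_inter_lt_of_card_eq (hV x (𝒱.mem_V_of_mem_E he (Sym2.mem_mk_left x y)))
      (hV y (𝒱.mem_V_of_mem_E he (Sym2.mem_mk_right x y))) (𝒱.ne_of_mk_mem_E he)

omit [Fintype α] in
theorem subset_eUnion_of_mem {v : Finset α} {a : Sym2 (Finset α)} (hv : v ∈ a) :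
    v ⊆ eUnion a := by
  induction a using Sym2.ind with
  | _ x y =>
    rcases Sym2.mem_iff.mp hv with rfl | rfl
    · exact subset_union_left
    · exact subset_union_right

/- The endpoints are complete unions of two edges of tree `k` sharing a vertex (proximity),
and that vertex lies in the conditioning set. -/
theorem le_card_condSet (hk : 1 ≤ k) (hV : ∀ u ∈ 𝒱.V k, u.card = k) (he : e ∈ 𝒱.E (k + 1)) :
    k ≤ (condSet e).card := by
  obtain ⟨a, ha, b, hb, rfl, v, hva, hvb⟩ := 𝒱.proximity k hk e he
  rw [← hV v (𝒱.mem_V_of_mem_E ha hva)]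
  exact card_le_card (subset_inter (subset_eUnion_of_mem hva) (subset_eUnion_of_mem hvb))

theorem card_condSet_of_card_V (hV : ∀ j, 1 ≤ j → j ≤ k → ∀ u ∈ 𝒱.V j, u.card = j)
    (he : e ∈ 𝒱.E k) : (condSet e).card = k - 1 := by
  have hlt := 𝒱.card_condSet_lt (hV k (𝒱.one_le_and_add_one_le_card_of_mem_E he).1 le_rfl) he
  obtain _ | _ | j := k
  · omega
  · omega
  · have hle := 𝒱.le_card_condSet (by omega) (hV (j + 1) (by omega) (by omega)) he
    omega

theorem card_of_mem_V {u : Finset α} (hk : 1 ≤ k) (hu : u ∈ 𝒱.V k) : u.card = k := by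
  induction k using Nat.strong_induction_on generalizing u with
  | _ k ih =>
    obtain _ | _ | j := k
    · omega
    · exact 𝒱.card_eq_one_of_mem_V_one hu
    · rw [𝒱.hVsucc (j + 1) (by omega)] at hu
      obtain ⟨e, he, rfl⟩ := mem_image.mp hu
      have hD := 𝒱.card_condSet_of_card_V (fun i hi hij _ => ih i (by omega) hi) he
      induction e using Sym2.ind with
      | _ x y =>
        have hx := ih (j + 1) (by omega) le_add_self (𝒱.mem_V_of_mem_E he (Sym2.mem_mk_left x y))
        have hy := ih (j + 1) (by omega) le_add_self (𝒱.mem_V_of_mem_E he (Sym2.mem_mk_right x y))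
        have hunion := card_union_add_card_inter x y
        simp only [eUnion, condSet, Sym2.lift_mk] at hD ⊢
        omega

theorem card_condSet (he : e ∈ 𝒱.E k) : (condSet e).card = k - 1 :=
  𝒱.card_condSet_of_card_V (fun _ hj _ _ hu => 𝒱.card_of_mem_V hj hu) he

end RegularVine

/-- For an edge `e ∈ E_k` joining vertices `v₁, v₂` (identified with their complete
unions), the conditioning set `D_e = U_{v₁} ∩ U_{v₂}` has `k - 1` elements, the
conditioned sets `U_{v₁} \ D_e` and `U_{v₂} \ D_e` are singletons, and
`U_e = {a_e} ∪ {b_e} ∪ D_e` is a disjoint union. -/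
theorem vine_conditioned_conditioning_cards {d : ℕ} (𝒱 : RegularVine (Fin d)) :
    ∀ k, 1 ≤ k → k ≤ d - 1 → ∀ e ∈ 𝒱.E k, ∀ v₁ v₂ : Finset (Fin d),
      e = s(v₁, v₂) →
      (v₁ ∩ v₂).card = k - 1 ∧
      (v₁ \ (v₁ ∩ v₂)).card = 1 ∧ (v₂ \ (v₁ ∩ v₂)).card = 1 ∧
      eUnion e = (v₁ \ (v₁ ∩ v₂)) ∪ (v₂ \ (v₁ ∩ v₂)) ∪ (v₁ ∩ v₂) ∧
      Disjoint (v₁ \ (v₁ ∩ v₂)) (v₂ \ (v₁ ∩ v₂)) ∧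
      Disjoint (v₁ \ (v₁ ∩ v₂)) (v₁ ∩ v₂) ∧
      Disjoint (v₂ \ (v₁ ∩ v₂)) (v₁ ∩ v₂) := by
  rintro k hk - e he v₁ v₂ rfl
  have hD : (v₁ ∩ v₂).card = k - 1 := 𝒱.card_condSet he
  have hv₁ : v₁.card = k := 𝒱.card_of_mem_V hk (𝒱.mem_V_of_mem_E he (Sym2.mem_mk_left v₁ v₂))
  have hv₂ : v₂.card = k := 𝒱.card_of_mem_V hk (𝒱.mem_V_of_mem_E he (Sym2.mem_mk_right v₁ v₂))
  refine ⟨hD, ?_, ?_, ?_, ?_, sdiff_disjoint, sdiff_disjoint⟩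
  · rw [card_sdiff_of_subset inter_subset_left]; omega
  · rw [card_sdiff_of_subset inter_subset_right]; omega
  · rw [sdiff_inter_self_left, sdiff_inter_self_right]
    exact union_eq_sdiff_union_sdiff_union_inter v₁ v₂
  · rw [sdiff_inter_self_left, sdiff_inter_self_right]
    exact disjoint_sdiff_sdiff
end

section
/- In the M-vine model (D-vine cross-sectional structure with equal in- and out-vertex permutations (i_1,...,i_d) = (j_1,...,j_d)), the restriction of the vine to any time window [t, t+m] is a vine, i.e., all levels of the restricted graph are connected trees. -/
open Finset

variable {α : Type*} [DecidableEq α] [Fintype α]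

/-- Edges of the restriction of a vine on `{1,…,T} × {1,…,d}` to the time window
`[t, t+m]` (tree level `k`): edges all of whose labels have time index in the window. -/
def Ewin {T d : ℕ} (𝒱 : RegularVine (Fin T × Fin d)) (t m k : ℕ) :
    Finset (Sym2 (Finset (Fin T × Fin d))) :=
  (𝒱.E k).filter (fun e => ∀ x ∈ eUnion e, t ≤ (x.1 : ℕ) ∧ (x.1 : ℕ) ≤ t + m)

/-- Vertices of the restriction to the time window `[t, t+m]`. -/
def Vwin {T d : ℕ} (𝒱 : RegularVine (Fin T × Fin d)) (t m k : ℕ) :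
    Finset (Finset (Fin T × Fin d)) :=
  (𝒱.V k).filter (fun v => ∀ x ∈ v, t ≤ (x.1 : ℕ) ∧ (x.1 : ℕ) ≤ t + m)

/-- `S'` is the translation of `S` by `τ` time steps. -/
def IsShiftSet {T d : ℕ} (τ : ℤ) (S S' : Finset (Fin T × Fin d)) : Prop :=
  ∀ x : Fin T × Fin d, x ∈ S' ↔ ∃ y ∈ S, (x.1 : ℤ) = (y.1 : ℤ) + τ ∧ x.2 = y.2

/-- `e'` is the translation of the edge `e` by `τ` time steps. -/
def IsShiftEdge {T d : ℕ} (τ : ℤ) (e e' : Sym2 (Finset (Fin T × Fin d))) : Prop :=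
  ∃ A B A' B', e = s(A, B) ∧ e' = s(A', B') ∧ IsShiftSet τ A A' ∧ IsShiftSet τ B B'

/-- A vine on `{1,…,T} × {1,…,d}` is stationary: every restriction to a time window
is a translation of the restriction to any other window of the same length. -/
def Stationary {T d : ℕ} (𝒱 : RegularVine (Fin T × Fin d)) : Prop :=
  ∀ t s m : ℕ, t + m + 1 ≤ T → s + m + 1 ≤ T → ∀ k,
    ∀ e ∈ Ewin 𝒱 t m k, ∃ e' ∈ Ewin 𝒱 s m k, IsShiftEdge ((s : ℤ) - (t : ℤ)) e e'

/-- Embed a cross-sectional label set at time `t`. -/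
def timeEmbed {T d : ℕ} (t : Fin T) (A : Finset (Fin d)) : Finset (Fin T × Fin d) :=
  A.image (fun j => (t, j))

/-- `{(u, σ 0), …, (u, σ (n-1))}`. -/
def Tset {T d : ℕ} (u : Fin T) (σ : Fin d → Fin d) (n : ℕ) : Finset (Fin T × Fin d) :=
  (Finset.univ.filter (fun s : Fin d => (s : ℕ) < n)).image (fun s => (u, σ s))

def tcast {T : ℕ} (t : Fin (T - 1)) : Fin T := Fin.castLE (Nat.sub_le T 1) t

def tsucc {T : ℕ} (t : Fin (T - 1)) : Fin T := ⟨(t : ℕ) + 1, by have := t.isLt; omega⟩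

/-- The connecting edges of tree level `k ∈ {1,…,d}` of a stationary vine with
in-vertices `σ` and out-vertices `τ'` (explicit characterization, Theorem 3.5). -/
def connEdges (T d : ℕ) (σ τ' : Fin d → Fin d) (k : ℕ) :
    Finset (Sym2 (Finset (Fin T × Fin d))) :=
  (Finset.univ : Finset (Fin (T - 1))).biUnion (fun t =>
    (Finset.range k).image (fun r =>
      s(Tset (tcast t) σ (k - r) ∪ Tset (tsucc t) τ' r,
        Tset (tcast t) σ (k - 1 - r) ∪ Tset (tsucc t) τ' (r + 1))))

/-- The edges of tree level `k ∈ {1,…,d}` of the stationary vine built from the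
cross-sectional vine `V0` and the permutations `σ` (in) and `τ'` (out). -/
def svineEdges (T : ℕ) {d : ℕ} (V0 : RegularVine (Fin d)) (σ τ' : Fin d → Fin d)
    (k : ℕ) : Finset (Sym2 (Finset (Fin T × Fin d))) :=
  ((Finset.univ : Finset (Fin T)).biUnion
      (fun t => (V0.E k).image (Sym2.map (timeEmbed t))))
    ∪ connEdges T d σ τ' k


/-!
Below level `d`, level `k` of the restriction to the window `[a, a + m]` consists of one copy of
level `k` of the cross-sectional vine `V0` (a tree, as `k < d`) for each time `u` of the window.
By compatibility of `σ`, the copy at time `u` contains `slice σ u k`, and the slices of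
consecutive times are joined by the paths of connecting edges, so every vertex of the window is
connected to `slice σ a k`. The incidence conditions and acyclicity are inherited from the full
tree.

At level `d` the cross-sectional vine has no edges left, and the connecting edges form a single
path through all times in which every vertex contains a label absent from its predecessors. By the
proximity condition each higher level is the path of unions of consecutive vertices, which
inherits this property. A window meets each of these paths in an interval of indices, that is, in
a subpath.
-/

set_option linter.unusedSectionVars false

theorem eUnion_mk (A B : Finset α) : eUnion s(A, B) = A ∪ B := rfl

theorem subset_eUnion_of_mem {e : Sym2 (Finset α)} {S : Finset α} (hS : S ∈ e) :
    S ⊆ eUnion e := by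
  induction e using Sym2.ind with
  | _ A B => rcases Sym2.mem_iff.1 hS with rfl | rfl <;> simp [eUnion_mk]

theorem eUnion_nonempty {e : Sym2 (Finset α)} (he : ¬ e.IsDiag) : (eUnion e).Nonempty := by
  induction e using Sym2.ind with
  | _ A B =>
    rw [Sym2.mk_isDiag_iff] at he
    rw [eUnion_mk, Finset.nonempty_iff_ne_empty, Ne, Finset.union_eq_empty]
    rintro ⟨rfl, rfl⟩
    exact he rfl

theorem condPair_union_condSet (e : Sym2 (Finset α)) : condPair e ∪ condSet e = eUnion e := by
  induction e using Sym2.ind with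
  | _ A B =>
    ext x
    by_cases hA : x ∈ A <;> by_cases hB : x ∈ B <;>
      simp [condPair, condSet, eUnion, Finset.mem_symmDiff, hA, hB]

theorem graphOf_mono {E F : Finset (Sym2 α)} (h : E ⊆ F) : graphOf E ≤ graphOf F :=
  fun _ _ hxy => ⟨hxy.1, h hxy.2⟩

theorem SimpleGraph.Reachable.graphOf_map {β : Type*} [DecidableEq β] [Fintype β]
    {E : Finset (Sym2 α)} {F : Finset (Sym2 β)} {f : α → β} (hf : Function.Injective f)
    (hEF : ∀ e ∈ E, e.map f ∈ F) {x y : α} (h : (graphOf E).Reachable x y) :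
    (graphOf F).Reachable (f x) (f y) :=
  h.map (G := graphOf E) (G' := graphOf F)
    { toFun := f, map_rel' := fun hxy => ⟨hf.ne hxy.1, by simpa using hEF _ hxy.2⟩ }

theorem SimpleGraph.reachable_of_forall_reachable_succ {β : Type*} {G : SimpleGraph β}
    (f : ℕ → β) {i j : ℕ} (hij : i ≤ j)
    (h : ∀ p, i ≤ p → p < j → G.Reachable (f p) (f (p + 1))) : G.Reachable (f i) (f j) := by
  induction j, hij using Nat.le_induction with
  | base => rfl
  | succ j hij ih => exact (ih fun p hp hpj => h p hp (by omega)).trans (h j hij (by omega))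

theorem mem_of_reachable_of_forall_mem_consecutive {F : Finset (Sym2 α)} {u : ℕ → α} {N : ℕ}
    (hu : Set.InjOn u (Set.Iic N)) (hF : ∀ e ∈ F, ∃ a < N, e = s(u a, u (a + 1)))
    {i p q : ℕ} (hp : p ≤ i) (hq : i < q) (hqN : q ≤ N)
    (hr : (graphOf F).Reachable (u p) (u q)) : s(u i, u (i + 1)) ∈ F := by
  obtain ⟨w⟩ := hr
  suffices H : ∀ x y (w : (graphOf F).Walk x y) p, x = u p → y = u q → p ≤ i →
      s(u i, u (i + 1)) ∈ F from H _ _ w p rfl rfl hp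
  intro x y w
  induction w with
  | nil =>
    rintro p rfl hpq hp
    have := hu (Set.mem_Iic.2 (by omega)) (Set.mem_Iic.2 (by omega)) hpq
    omega
  | cons h w ih =>
    rintro p rfl hy hp
    obtain ⟨a, ha, hae⟩ := hF _ h.2
    rcases Sym2.eq_iff.1 hae with ⟨h1, h2⟩ | ⟨h1, h2⟩
    · obtain rfl : p = a := hu (Set.mem_Iic.2 (by omega)) (Set.mem_Iic.2 (by omega)) h1
      by_cases hpi : p = i
      · subst hpi
        rw [← h2]
        exact h.2
      · exact ih (p + 1) h2 hy (by omega)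
    · obtain rfl : p = a + 1 := hu (Set.mem_Iic.2 (by omega)) (Set.mem_Iic.2 (by omega)) h1
      exact ih a h2 hy (by omega)

theorem IsTreeOn.exists_mem_edge {V : Finset α} {E : Finset (Sym2 α)} (h : IsTreeOn V E)
    (hE : E.Nonempty) {x : α} (hx : x ∈ V) : ∃ e ∈ E, x ∈ e := by
  obtain ⟨e, he⟩ := hE
  induction e using Sym2.ind with
  | _ a b =>
    have hab : a ≠ b := fun hab => h.2.1 _ he (Sym2.mk_isDiag_iff.2 hab)
    have hxy : ∃ y ∈ V, x ≠ y := by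
      by_cases hxa : x = a
      · exact ⟨b, h.1 _ he b (Sym2.mem_mk_right a b), hxa ▸ hab⟩
      · exact ⟨a, h.1 _ he a (Sym2.mem_mk_left a b), hxa⟩
    obtain ⟨y, hy, hxy⟩ := hxy
    obtain ⟨w⟩ := h.2.2.2 x hx y hy
    exact ⟨_, (w.adj_snd (SimpleGraph.Walk.not_nil_of_ne hxy)).2, Sym2.mem_mk_left _ _⟩

theorem IsTreeOn.mem_iff_exists_mem_edge {V : Finset α} {E : Finset (Sym2 α)}
    (h : IsTreeOn V E) (hE : E.Nonempty) {x : α} : x ∈ V ↔ ∃ e ∈ E, x ∈ e :=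
  ⟨h.exists_mem_edge hE, fun ⟨e, he, hx⟩ => h.1 e he x hx⟩

def restrictVertices (V : Finset (Finset α)) (p : α → Prop) [DecidablePred p] :
    Finset (Finset α) :=
  V.filter fun S => ∀ x ∈ S, p x

def restrictEdges (E : Finset (Sym2 (Finset α))) (p : α → Prop) [DecidablePred p] :
    Finset (Sym2 (Finset α)) :=
  E.filter fun e => ∀ x ∈ eUnion e, p x

theorem IsTreeOn.restrict {V : Finset (Finset α)} {E : Finset (Sym2 (Finset α))}
    (h : IsTreeOn V E) (p : α → Prop) [DecidablePred p]
    (hconn : ∀ S ∈ restrictVertices V p, ∀ S' ∈ restrictVertices V p,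
      (graphOf (restrictEdges E p)).Reachable S S') :
    IsTreeOn (restrictVertices V p) (restrictEdges E p) := by
  refine ⟨fun e he S hS => ?_, fun e he => h.2.1 e (filter_subset _ _ he),
    h.2.2.1.anti (graphOf_mono (filter_subset _ _)), hconn⟩
  rw [restrictEdges, mem_filter] at he
  exact mem_filter.2 ⟨h.1 e he.1 S hS, fun x hx => he.2 x (subset_eUnion_of_mem hS hx)⟩

theorem injOn_Iic_of_exists_fresh {β : Type*} {v : ℕ → Finset β} {n : ℕ}
    (h : ∀ i < n, ∃ x ∈ v (i + 1), ∀ l ≤ i, x ∉ v l) : Set.InjOn v (Set.Iic n) := by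
  have hne : ∀ i j, i < j → j ≤ n → v i ≠ v j := by
    intro i j hij hj hv
    obtain ⟨x, hx, hfresh⟩ := h (j - 1) (by omega)
    rw [Nat.sub_add_cancel (by omega : 1 ≤ j), ← hv] at hx
    exact hfresh i (by omega) hx
  intro i hi j hj hv
  rcases lt_trichotomy i j with hij | rfl | hji
  · exact absurd hv (hne i j hij hj)
  · rfl
  · exact absurd hv.symm (hne j i hji hi)

theorem ordConnected_union_succ {β : Type*} [DecidableEq β] {v : ℕ → Finset β}
    {p : β → Prop} {n : ℕ} (h : Set.OrdConnected {i | i ≤ n + 1 ∧ ∀ x ∈ v i, p x}) :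
    Set.OrdConnected {i | i ≤ n ∧ ∀ x ∈ v i ∪ v (i + 1), p x} := by
  refine ⟨fun i hi l hl j hj => ?_⟩
  simp only [Set.mem_ofPred_eq, Set.mem_Icc, mem_union] at hi hl hj ⊢
  refine ⟨by omega, fun x hx => ?_⟩
  have hv := fun j' (h₁ : i ≤ j') (h₂ : j' ≤ l + 1) =>
    (h.out ⟨by omega, fun x hx => hi.2 x (Or.inl hx)⟩
      ⟨by omega, fun x hx => hl.2 x (Or.inr hx)⟩
      ⟨h₁, h₂⟩).2
  rcases hx with hx | hx
  exacts [hv j hj.1 (by omega) x hx, hv (j + 1) (by omega) (by omega) x hx]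

namespace RegularVine

variable (𝒱 : RegularVine α)

theorem V_eq_image_eUnion {k : ℕ} (hk : 2 ≤ k) : 𝒱.V k = (𝒱.E (k - 1)).image eUnion := by
  have := 𝒱.hVsucc (k - 1) (by omega)
  rwa [Nat.sub_add_cancel (by omega : 1 ≤ k)] at this

theorem nonempty_of_mem_V {k : ℕ} (hk : 1 ≤ k) {S : Finset α} (hS : S ∈ 𝒱.V k) :
    S.Nonempty := by
  rcases (show k = 1 ∨ 2 ≤ k by omega) with rfl | hk2
  · rw [𝒱.hV1] at hS
    obtain ⟨a, -, rfl⟩ := mem_image.1 hS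
    exact singleton_nonempty a
  · rw [𝒱.V_eq_image_eUnion hk2] at hS
    obtain ⟨e, he, rfl⟩ := mem_image.1 hS
    by_cases hkc : k - 1 + 1 ≤ Fintype.card α
    · exact eUnion_nonempty ((𝒱.tree (k - 1) (by omega) hkc).2.1 e he)
    · rw [𝒱.hEzero (k - 1) (Or.inr (by omega))] at he
      simp at he

structure IsFreshPath (k n : ℕ) (v : ℕ → Finset α) : Prop where
  edges_eq : 𝒱.E k = (range n).image fun i => s(v i, v (i + 1))
  exists_fresh : ∀ i < n, ∃ x ∈ v (i + 1), ∀ l ≤ i, x ∉ v l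

variable {𝒱} {k n : ℕ} {v : ℕ → Finset α}

theorem IsFreshPath.injOn (h : 𝒱.IsFreshPath k n v) : Set.InjOn v (Set.Iic n) :=
  injOn_Iic_of_exists_fresh h.exists_fresh

theorem IsFreshPath.mem_V_iff (h : 𝒱.IsFreshPath k n v) (hk : 1 ≤ k)
    (hkc : k + 1 ≤ Fintype.card α) (hn : 1 ≤ n) {S : Finset α} :
    S ∈ 𝒱.V k ↔ ∃ i ≤ n, S = v i := by
  have hE : (𝒱.E k).Nonempty := by
    rw [h.edges_eq]
    exact (nonempty_range_iff.2 (by omega)).image _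
  rw [(𝒱.tree k hk hkc).mem_iff_exists_mem_edge hE, h.edges_eq]
  constructor
  · rintro ⟨e, he, hS⟩
    obtain ⟨i, hi, rfl⟩ := mem_image.1 he
    rw [mem_range] at hi
    rcases Sym2.mem_iff.1 hS with rfl | rfl
    exacts [⟨i, by omega, rfl⟩, ⟨i + 1, by omega, rfl⟩]
  · rintro ⟨i, hi, rfl⟩
    rcases Nat.lt_or_ge i n with hin | hin
    · exact ⟨_, mem_image_of_mem _ (mem_range.2 hin), Sym2.mem_mk_left _ _⟩
    · obtain rfl : i = n := by omega
      refine ⟨_, mem_image_of_mem _ (mem_range.2 (show i - 1 < i by omega)), ?_⟩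
      rw [Nat.sub_add_cancel hn]
      exact Sym2.mem_mk_right _ _

theorem IsFreshPath.exists_eq_of_mem_E_succ (h : 𝒱.IsFreshPath k (n + 1) v) (hk : 1 ≤ k)
    {p : Sym2 (Finset α)} (hp : p ∈ 𝒱.E (k + 1)) (hnd : ¬ p.IsDiag) :
    ∃ i < n, p = s(v i ∪ v (i + 1), v (i + 1) ∪ v (i + 1 + 1)) := by
  obtain ⟨a, ha, b, hb, rfl, w, hwa, hwb⟩ := 𝒱.proximity k hk p hp
  rw [h.edges_eq] at ha hb
  obtain ⟨i, hi, rfl⟩ := mem_image.1 ha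
  obtain ⟨j, hj, rfl⟩ := mem_image.1 hb
  rw [mem_range] at hi hj
  have hij : i ≠ j := by
    rintro rfl
    exact hnd (Sym2.mk_isDiag_iff.2 rfl)
  have hclose : i ≤ j + 1 ∧ j ≤ i + 1 := by
    rcases Sym2.mem_iff.1 hwa with rfl | rfl <;> rcases Sym2.mem_iff.1 hwb with hw | hw <;>
      have := h.injOn (Set.mem_Iic.2 (by omega)) (Set.mem_Iic.2 (by omega)) hw <;> omega
  rcases (show j = i + 1 ∨ i = j + 1 by omega) with rfl | rfl
  · exact ⟨i, by omega, rfl⟩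
  · exact ⟨j, by omega, Sym2.eq_swap⟩

theorem IsFreshPath.succ (h : 𝒱.IsFreshPath k (n + 1) v) (hk : 1 ≤ k)
    (hkc : k + 2 ≤ Fintype.card α) : 𝒱.IsFreshPath (k + 1) n fun i => v i ∪ v (i + 1) := by
  set u : ℕ → Finset α := fun i => v i ∪ v (i + 1)
  have htree := 𝒱.tree (k + 1) (by omega) hkc
  have hfresh : ∀ i < n, ∃ x ∈ u (i + 1), ∀ l ≤ i, x ∉ u l := by
    intro i hi
    obtain ⟨x, hx, hxl⟩ := h.exists_fresh (i + 1) (by omega)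
    refine ⟨x, mem_union_right _ hx, fun l hl hxu => ?_⟩
    rcases mem_union.1 hxu with hxu | hxu
    exacts [hxl l (by omega) hxu, hxl (l + 1) (by omega) hxu]
  have hsub : ∀ p ∈ 𝒱.E (k + 1), ∃ i < n, p = s(u i, u (i + 1)) := fun p hp =>
    h.exists_eq_of_mem_E_succ hk hp (htree.2.1 p hp)
  have hmem : ∀ i ≤ n, u i ∈ 𝒱.V (k + 1) := fun i hi => by
    rw [𝒱.hVsucc k hk, h.edges_eq]
    exact mem_image_of_mem _ (mem_image_of_mem _ (mem_range.2 (by omega)))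
  refine ⟨Subset.antisymm (fun p hp => ?_) (fun p hp => ?_), hfresh⟩
  · obtain ⟨i, hi, rfl⟩ := hsub p hp
    exact mem_image_of_mem _ (mem_range.2 hi)
  · obtain ⟨i, hi, rfl⟩ := mem_image.1 hp
    rw [mem_range] at hi
    exact mem_of_reachable_of_forall_mem_consecutive (injOn_Iic_of_exists_fresh hfresh) hsub
      le_rfl (Nat.lt_succ_self i) hi (htree.2.2.2 _ (hmem i hi.le) _ (hmem (i + 1) hi))

theorem IsFreshPath.isTreeOn_restrict (h : 𝒱.IsFreshPath k n v) (hk : 1 ≤ k)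
    (hkc : k + 1 ≤ Fintype.card α) (hn : 1 ≤ n) (p : α → Prop) [DecidablePred p]
    (hp : Set.OrdConnected {i | i ≤ n ∧ ∀ x ∈ v i, p x}) :
    IsTreeOn (restrictVertices (𝒱.V k) p) (restrictEdges (𝒱.E k) p) := by
  refine (𝒱.tree k hk hkc).restrict p ?_
  have hadj : ∀ i < n, (∀ x ∈ v i, p x) → (∀ x ∈ v (i + 1), p x) →
      (graphOf (restrictEdges (𝒱.E k) p)).Adj (v i) (v (i + 1)) := by
    intro i hi hpi hpi1
    refine ⟨fun hv => by simpa using h.injOn (Set.mem_Iic.2 hi.le) (Set.mem_Iic.2 hi) hv,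
      mem_filter.2 ⟨?_, fun x hx => ?_⟩⟩
    · rw [h.edges_eq]
      exact mem_image_of_mem _ (mem_range.2 hi)
    · rcases mem_union.1 hx with hx | hx
      exacts [hpi x hx, hpi1 x hx]
  have hreach : ∀ i j, i ≤ j → j ≤ n → (∀ x ∈ v i, p x) → (∀ x ∈ v j, p x) →
      (graphOf (restrictEdges (𝒱.E k) p)).Reachable (v i) (v j) := by
    intro i j hij hj hpi hpj
    refine SimpleGraph.reachable_of_forall_reachable_succ v hij fun l hil hlj => ?_
    have hmid := fun l' (h₁ : i ≤ l') (h₂ : l' ≤ j) =>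
      (hp.out ⟨by omega, hpi⟩ ⟨hj, hpj⟩ ⟨h₁, h₂⟩ :
        l' ∈ {i | i ≤ n ∧ ∀ x ∈ v i, p x}).2
    exact (hadj l (by omega) (hmid l hil hlj.le) (hmid (l + 1) (by omega) hlj)).reachable
  intro S hS S' hS'
  simp only [restrictVertices, mem_filter, h.mem_V_iff hk hkc hn] at hS hS'
  obtain ⟨⟨i, hi, rfl⟩, hpi⟩ := hS
  obtain ⟨⟨j, hj, rfl⟩, hpj⟩ := hS'
  rcases le_total i j with hij | hji
  · exact hreach i j hij hj hpi hpj
  · exact (hreach j i hji hi hpj hpi).symm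

end RegularVine

namespace MVine

open Function

variable {T d : ℕ}

def prefixSet (σ : Fin d → Fin d) (c : ℕ) : Finset (Fin d) :=
  (univ.filter fun s : Fin d => (s : ℕ) < c).image σ

/-- Times are natural numbers here: `slice σ u c` is empty when `u ≥ T`. -/
def slice (σ : Fin d → Fin d) (u c : ℕ) : Finset (Fin T × Fin d) :=
  univ.filter fun x => (x.1 : ℕ) = u ∧ x.2 ∈ prefixSet σ c

/-- The connecting edges of level `k` between times `t` and `t + 1` form the path
`slice σ t k = connVertex σ τ t k 0, …, connVertex σ τ t k k = slice τ (t + 1) k`. -/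
def connVertex (σ τ : Fin d → Fin d) (t k r : ℕ) : Finset (Fin T × Fin d) :=
  slice σ t (k - r) ∪ slice τ (t + 1) r

variable {σ τ : Fin d → Fin d} {V0 : RegularVine (Fin d)} {𝒱 : RegularVine (Fin T × Fin d)}

theorem mem_prefixSet_of_lt {c : ℕ} {s : Fin d} (hs : (s : ℕ) < c) : σ s ∈ prefixSet σ c :=
  mem_image_of_mem σ (mem_filter.2 ⟨mem_univ s, hs⟩)

theorem mem_prefixSet (hσ : Injective σ) {c : ℕ} {s : Fin d} :
    σ s ∈ prefixSet σ c ↔ (s : ℕ) < c := by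
  simp [prefixSet, hσ.eq_iff]

theorem prefixSet_mono {c c' : ℕ} (h : c ≤ c') : prefixSet σ c ⊆ prefixSet σ c' :=
  image_subset_image (monotone_filter_right _ fun _ _ hs => lt_of_lt_of_le hs h)

theorem mem_slice {u c : ℕ} {x : Fin T × Fin d} :
    x ∈ slice σ u c ↔ (x.1 : ℕ) = u ∧ x.2 ∈ prefixSet σ c := by
  simp [slice]

theorem slice_zero (u : ℕ) : slice (T := T) σ u 0 = ∅ := by
  ext x
  simp [mem_slice, prefixSet]

theorem slice_mono {u c c' : ℕ} (h : c ≤ c') : slice (T := T) σ u c ⊆ slice σ u c' :=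
  fun _ hx => mem_slice.2 ⟨(mem_slice.1 hx).1, prefixSet_mono h (mem_slice.1 hx).2⟩

theorem Tset_eq_slice (u : Fin T) (c : ℕ) : Tset u σ c = slice σ u c := by
  ext ⟨u', j⟩
  simp only [Tset, slice, prefixSet, mem_image, mem_filter, mem_univ, true_and, Prod.mk.injEq]
  constructor
  · rintro ⟨s, hs, rfl, rfl⟩
    exact ⟨rfl, s, hs, rfl⟩
  · rintro ⟨hu, s, hs, rfl⟩
    exact ⟨s, hs, (Fin.ext hu).symm, rfl⟩

theorem timeEmbed_prefixSet (u : Fin T) (c : ℕ) :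
    timeEmbed u (prefixSet σ c) = slice σ u c := by
  rw [timeEmbed, prefixSet, image_image, ← Tset_eq_slice]
  rfl

theorem connVertex_zero (t k : ℕ) : connVertex (T := T) σ τ t k 0 = slice σ t k := by
  simp [connVertex, slice_zero]

theorem connVertex_self (t k : ℕ) : connVertex (T := T) σ τ t k k = slice τ (t + 1) k := by
  simp [connVertex, slice_zero]

theorem connVertex_union_succ (t k r : ℕ) :
    connVertex (T := T) σ τ t k r ∪ connVertex σ τ t k (r + 1) =
      connVertex σ τ t (k + 1) (r + 1) := by
  have h₁ : slice (T := T) σ t (k - (r + 1)) ⊆ slice σ t (k - r) := slice_mono (by omega)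
  have h₂ : slice (T := T) τ (t + 1) r ⊆ slice τ (t + 1) (r + 1) := slice_mono (by omega)
  rw [connVertex, connVertex, connVertex, show k + 1 - (r + 1) = k - r by omega]
  ext x
  simp only [mem_union]
  constructor
  · rintro ((hx | hx) | hx | hx)
    exacts [Or.inl hx, Or.inr (h₂ hx), Or.inl (h₁ hx), Or.inr hx]
  · rintro (hx | hx)
    exacts [Or.inl (Or.inl hx), Or.inr (Or.inr hx)]

theorem time_eq_of_mem_connVertex {t k r : ℕ} {x : Fin T × Fin d}
    (hx : x ∈ connVertex σ τ t k r) : (x.1 : ℕ) = t ∨ (x.1 : ℕ) = t + 1 := by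
  rcases mem_union.1 hx with hx | hx
  exacts [Or.inl (mem_slice.1 hx).1, Or.inr (mem_slice.1 hx).1]

theorem mem_connEdges {k : ℕ} {p : Sym2 (Finset (Fin T × Fin d))} :
    p ∈ connEdges T d σ τ k ↔ ∃ t r, t + 1 < T ∧ r < k ∧
      p = s(connVertex σ τ t k r, connVertex σ τ t k (r + 1)) := by
  simp only [connEdges, mem_biUnion, mem_univ, true_and, mem_image, mem_range]
  constructor
  · rintro ⟨t, r, hr, rfl⟩
    refine ⟨t, r, by omega, hr, ?_⟩
    simp only [connVertex, Tset_eq_slice, tcast, tsucc, Fin.val_castLE,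
      show k - 1 - r = k - (r + 1) by omega]
  · rintro ⟨t, r, ht, hr, rfl⟩
    refine ⟨⟨t, by omega⟩, r, hr, ?_⟩
    simp only [connVertex, Tset_eq_slice, tcast, tsucc, Fin.val_castLE,
      show k - 1 - r = k - (r + 1) by omega]

theorem mem_svineEdges {k : ℕ} {p : Sym2 (Finset (Fin T × Fin d))} :
    p ∈ svineEdges T V0 σ τ k ↔
      (∃ u : Fin T, ∃ e ∈ V0.E k, p = e.map (timeEmbed u)) ∨
        p ∈ connEdges T d σ τ k := by
  simp only [svineEdges, mem_union, mem_biUnion, mem_univ, true_and, mem_image, eq_comm (a := p)]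

theorem eUnion_map_timeEmbed (u : Fin T) (e : Sym2 (Finset (Fin d))) :
    eUnion (e.map (timeEmbed u)) = timeEmbed u (eUnion e) := by
  induction e using Sym2.ind with
  | _ A B => simp [eUnion_mk, timeEmbed, image_union]

theorem timeEmbed_injective (u : Fin T) : Injective (timeEmbed (d := d) u) :=
  image_injective fun _ _ h => (Prod.mk.inj h).2

theorem mem_timeEmbed {u : Fin T} {A : Finset (Fin d)} {x : Fin T × Fin d} :
    x ∈ timeEmbed u A ↔ x.1 = u ∧ x.2 ∈ A := by
  obtain ⟨u', j⟩ := x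
  simp only [timeEmbed, mem_image, Prod.mk.injEq]
  constructor
  · rintro ⟨j, hj, rfl, rfl⟩
    exact ⟨rfl, hj⟩
  · rintro ⟨rfl, hj⟩
    exact ⟨j, hj, rfl, rfl⟩

theorem _root_.Compatible.prefixSet_mem_V (hc : Compatible V0 σ) {k : ℕ} (hk : 1 ≤ k)
    (hkd : k ≤ d) : prefixSet σ k ∈ V0.V k := by
  rcases (show k = 1 ∨ 2 ≤ k by omega) with rfl | hk2
  · rw [V0.hV1]
    refine mem_image.2 ⟨σ ⟨0, by omega⟩, mem_univ _, ?_⟩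
    ext j
    simp only [prefixSet, mem_singleton, mem_image, mem_filter, mem_univ, true_and, Nat.lt_one_iff]
    constructor
    · rintro rfl
      exact ⟨⟨0, by omega⟩, rfl, rfl⟩
    · rintro ⟨s, hs, rfl⟩
      rw [show s = ⟨0, by omega⟩ from Fin.ext hs]
  · obtain ⟨r, hr, e, he, hpair, hset⟩ := hc ⟨k - 1, by omega⟩ (by simp only; omega)
    rw [V0.V_eq_image_eUnion hk2]
    refine mem_image.2 ⟨e, he, ?_⟩
    rw [← condPair_union_condSet, hpair, hset]
    have hr' : (r : ℕ) < k - 1 := hr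
    ext j
    simp only [prefixSet, mem_union, mem_insert, mem_singleton, mem_erase, mem_image, mem_filter,
      mem_univ, true_and, Fin.lt_def]
    constructor
    · rintro ((rfl | rfl) | ⟨-, s, hs, rfl⟩)
      exacts [⟨_, by simp only; omega, rfl⟩, ⟨r, by omega, rfl⟩, ⟨s, by omega, rfl⟩]
    · rintro ⟨s, hs, rfl⟩
      by_cases hsk : (s : ℕ) = k - 1
      · exact Or.inl (Or.inl (congrArg σ (Fin.ext hsk)))
      · by_cases hsr : σ s = σ r
        · exact Or.inl (Or.inr hsr)
        · exact Or.inr ⟨hsr, s, by omega, rfl⟩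

def HasLowerLevels (𝒱 : RegularVine (Fin T × Fin d)) (V0 : RegularVine (Fin d))
    (σ : Fin d → Fin d) : Prop :=
  ∀ k, 1 ≤ k → k ≤ d → 𝒱.E k = svineEdges T V0 σ σ k

theorem HasLowerLevels.mem_V (h : HasLowerLevels 𝒱 V0 σ) {k : ℕ} (hk : 1 ≤ k)
    (hkd : k ≤ d) {w : Finset (Fin T × Fin d)} (hw : w ∈ 𝒱.V k) :
    (∃ u : Fin T, ∃ A ∈ V0.V k, w = timeEmbed u A) ∨
      ∃ t r, t + 1 < T ∧ 0 < r ∧ r < k ∧ w = connVertex σ σ t k r := by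
  rcases (show k = 1 ∨ 2 ≤ k by omega) with rfl | hk2
  · rw [𝒱.hV1] at hw
    obtain ⟨x, -, rfl⟩ := mem_image.1 hw
    refine Or.inl ⟨x.1, {x.2}, V0.hV1 ▸ mem_image_of_mem _ (mem_univ _), ?_⟩
    ext y
    simp [mem_timeEmbed, Prod.ext_iff]
  · rw [𝒱.V_eq_image_eUnion hk2, h (k - 1) (by omega) (by omega)] at hw
    obtain ⟨e, he, rfl⟩ := mem_image.1 hw
    rcases mem_svineEdges.1 he with ⟨u, e0, he0, rfl⟩ | hconn
    · refine Or.inl ⟨u, eUnion e0, ?_, eUnion_map_timeEmbed u e0⟩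
      rw [V0.V_eq_image_eUnion hk2]
      exact mem_image_of_mem _ he0
    · obtain ⟨t, r, ht, hr, rfl⟩ := mem_connEdges.1 hconn
      refine Or.inr ⟨t, r + 1, ht, by omega, by omega, ?_⟩
      rw [eUnion_mk, connVertex_union_succ, Nat.sub_add_cancel (by omega : 1 ≤ k)]

theorem HasLowerLevels.reachable_timeEmbed (h : HasLowerLevels 𝒱 V0 σ) {a m k : ℕ}
    (hk : 1 ≤ k) (hkd : k + 1 ≤ d) {u : Fin T} (hau : a ≤ u) (hum : (u : ℕ) ≤ a + m)
    {A B : Finset (Fin d)} (hA : A ∈ V0.V k) (hB : B ∈ V0.V k) :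
    (graphOf (Ewin 𝒱 a m k)).Reachable (timeEmbed u A) (timeEmbed u B) := by
  refine ((V0.tree k hk (by simpa using hkd)).2.2.2 A hA B hB).graphOf_map
    (timeEmbed_injective u) fun e he => mem_filter.2 ⟨?_, fun x hx => ?_⟩
  · rw [h k hk (by omega)]
    exact mem_svineEdges.2 (Or.inl ⟨u, e, he, rfl⟩)
  · rw [eUnion_map_timeEmbed, mem_timeEmbed] at hx
    rw [hx.1]
    exact ⟨hau, hum⟩

theorem HasLowerLevels.reachable_connVertex (h : HasLowerLevels 𝒱 V0 σ) {a m k t : ℕ}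
    (hk : 1 ≤ k) (hkd : k ≤ d) (hat : a ≤ t) (htm : t + 1 ≤ a + m) (hw : a + m + 1 ≤ T)
    {r : ℕ} (hr : r ≤ k) :
    (graphOf (Ewin 𝒱 a m k)).Reachable (slice σ t k) (connVertex σ σ t k r) := by
  have hnd := (𝒱.tree k hk (by simp only [Fintype.card_prod, Fintype.card_fin]; nlinarith)).2.1
  rw [← connVertex_zero (τ := σ)]
  refine SimpleGraph.reachable_of_forall_reachable_succ (connVertex σ σ t k) (Nat.zero_le r)
    fun i _ hi => SimpleGraph.Adj.reachable ?_
  have he : s(connVertex σ σ t k i, connVertex σ σ t k (i + 1)) ∈ 𝒱.E k := by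
    rw [h k hk hkd]
    exact mem_svineEdges.2 (Or.inr (mem_connEdges.2 ⟨t, i, by omega, by omega, rfl⟩))
  refine ⟨fun heq => hnd _ he (Sym2.mk_isDiag_iff.2 heq), mem_filter.2 ⟨he, fun x hx => ?_⟩⟩
  rw [eUnion_mk, connVertex_union_succ] at hx
  rcases time_eq_of_mem_connVertex hx with hx | hx <;> omega

theorem HasLowerLevels.reachable_slice (h : HasLowerLevels 𝒱 V0 σ) {a m k u : ℕ}
    (hk : 1 ≤ k) (hkd : k ≤ d) (hw : a + m + 1 ≤ T) (hau : a ≤ u) (hum : u ≤ a + m) :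
    (graphOf (Ewin 𝒱 a m k)).Reachable (slice σ a k) (slice σ u k) :=
  SimpleGraph.reachable_of_forall_reachable_succ (fun u => slice σ u k) hau fun t hat htu => by
    simpa [connVertex_self] using h.reachable_connVertex hk hkd hat (by omega) hw le_rfl

theorem HasLowerLevels.isTreeOn_window_of_lt (h : HasLowerLevels 𝒱 V0 σ)
    (hc : Compatible V0 σ) {a m k : ℕ} (hw : a + m + 1 ≤ T) (hk : 1 ≤ k)
    (hkd : k + 1 ≤ d) : IsTreeOn (Vwin 𝒱 a m k) (Ewin 𝒱 a m k) := by
  have hkd' : k ≤ d := by omega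
  refine (𝒱.tree k hk (by simp only [Fintype.card_prod, Fintype.card_fin]; nlinarith)).restrict
    (fun x => a ≤ (x.1 : ℕ) ∧ (x.1 : ℕ) ≤ a + m) ?_
  suffices hhub : ∀ w ∈ Vwin 𝒱 a m k,
      (graphOf (Ewin 𝒱 a m k)).Reachable w (slice σ a k) from
    fun S hS S' hS' => (hhub S hS).trans (hhub S' hS').symm
  intro w hw'
  obtain ⟨hwV, hwin⟩ := mem_filter.1 hw'
  rcases h.mem_V hk hkd' hwV with ⟨u, A, hA, rfl⟩ | ⟨t, r, ht, hr0, hrk, rfl⟩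
  · obtain ⟨j, hj⟩ := V0.nonempty_of_mem_V hk hA
    have hu := hwin (u, j) (mem_timeEmbed.2 ⟨rfl, hj⟩)
    have hhub := h.reachable_timeEmbed hk hkd hu.1 hu.2 hA (hc.prefixSet_mem_V hk hkd')
    rw [timeEmbed_prefixSet] at hhub
    exact hhub.trans (h.reachable_slice hk hkd' hw hu.1 hu.2).symm
  · have ht₀ := hwin (⟨t, by omega⟩, σ ⟨0, by omega⟩)
      (mem_union_left _ (mem_slice.2 ⟨rfl, mem_prefixSet_of_lt (by simp only; omega)⟩))
    have ht₁ := hwin (⟨t + 1, ht⟩, σ ⟨0, by omega⟩)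
      (mem_union_right _ (mem_slice.2 ⟨rfl, mem_prefixSet_of_lt hr0⟩))
    exact (h.reachable_connVertex hk hkd' ht₀.1 ht₁.2 hw hrk.le).symm.trans
      (h.reachable_slice hk hkd' hw ht₀.1 (by omega)).symm

def pathVertex (σ : Fin d → Fin d) (i : ℕ) : Finset (Fin T × Fin d) :=
  connVertex σ σ (i / d) d (i % d)

theorem pathVertex_mul_add {t r : ℕ} (hr : r < d) :
    pathVertex (T := T) σ (t * d + r) = connVertex σ σ t d r := by
  have hd : 0 < d := by omega
  have hdiv : (t * d + r) / d = t := by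
    rw [Nat.add_comm, Nat.add_mul_div_right _ _ hd, Nat.div_eq_of_lt hr, zero_add]
  have hmod : (t * d + r) % d = r := by
    rw [Nat.add_comm, Nat.add_mul_mod_self_right, Nat.mod_eq_of_lt hr]
  rw [pathVertex, hdiv, hmod]

theorem pathVertex_mul_add_succ {t r : ℕ} (hr : r < d) :
    pathVertex (T := T) σ (t * d + r + 1) = connVertex σ σ t d (r + 1) := by
  rcases (show r + 1 < d ∨ r + 1 = d by omega) with hr₁ | hr₁
  · exact pathVertex_mul_add hr₁
  · rw [show t * d + r + 1 = (t + 1) * d + 0 by rw [← hr₁]; ring,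
      pathVertex_mul_add (by omega),
      connVertex_zero, hr₁, connVertex_self]

/-- The label `(u, σ s)` joins the path at vertex `u * d + s + 1 - d` and leaves it at
`u * d + d - s`. -/
theorem mem_pathVertex (hσ : Injective σ) {u : Fin T} {s : Fin d} {l : ℕ} :
    (u, σ s) ∈ pathVertex σ l ↔ u * d + s < l + d ∧ l + s < u * d + d := by
  obtain ⟨q, r, hr, rfl⟩ : ∃ q r, r < d ∧ l = q * d + r :=
    ⟨l / d, l % d, Nat.mod_lt _ s.pos, (Nat.div_add_mod' l d).symm⟩
  rw [pathVertex_mul_add hr, connVertex, mem_union, mem_slice, mem_slice, mem_prefixSet hσ,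
    mem_prefixSet hσ]
  simp only
  constructor
  · rintro (⟨hu, hs⟩ | ⟨hu, hs⟩) <;> rw [hu]
    · omega
    · rw [add_mul, one_mul]
      omega
  · rintro ⟨h₁, h₂⟩
    have hlo : q < (u : ℕ) + 1 := Nat.lt_of_mul_lt_mul_right (a := d) (by rw [add_mul]; omega)
    have hhi : (u : ℕ) < q + 2 := Nat.lt_of_mul_lt_mul_right (a := d) (by rw [add_mul]; omega)
    rcases (show (u : ℕ) = q ∨ (u : ℕ) = q + 1 by omega) with hu | hu
    · rw [hu] at h₂
      exact Or.inl ⟨hu, by omega⟩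
    · rw [hu, add_mul, one_mul] at h₁
      exact Or.inr ⟨hu, by omega⟩

theorem pathVertex_exists_fresh (hσ : Injective σ) {i : ℕ} (hi : i + 1 ≤ (T - 1) * d) :
    ∃ x ∈ pathVertex (T := T) σ (i + 1), ∀ l ≤ i, x ∉ pathVertex σ l := by
  have hd : 0 < d := Nat.pos_of_ne_zero (by rintro rfl; simp at hi)
  obtain ⟨q, r, hr, rfl⟩ : ∃ q r, r < d ∧ i = q * d + r :=
    ⟨i / d, i % d, Nat.mod_lt _ hd, (Nat.div_add_mod' i d).symm⟩
  have hq : q + 1 < T := by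
    have : q < T - 1 := Nat.lt_of_mul_lt_mul_right (a := d) (by omega)
    omega
  refine ⟨(⟨q + 1, hq⟩, σ ⟨r, hr⟩), (mem_pathVertex hσ).2 ?_, fun l hl hx => ?_⟩
  · simp only [add_mul, one_mul]
    omega
  · have := ((mem_pathVertex hσ).1 hx).1
    simp only [add_mul, one_mul] at this
    omega

theorem pathVertex_window_iff (hσ : Bijective σ) (hT : 0 < T) (hd : 0 < d) {a m i : ℕ}
    (hi : i ≤ (T - 1) * d) :
    (∀ x ∈ pathVertex (T := T) σ i, a ≤ (x.1 : ℕ) ∧ (x.1 : ℕ) ≤ a + m) ↔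
      a * d ≤ i ∧ i ≤ (a + m) * d := by
  constructor
  · obtain ⟨q, r, hr, rfl⟩ : ∃ q r, r < d ∧ i = q * d + r :=
      ⟨i / d, i % d, Nat.mod_lt _ hd, (Nat.div_add_mod' i d).symm⟩
    intro hwin
    have hq : q < T := by
      have : q < T - 1 + 1 :=
        Nat.lt_of_mul_lt_mul_right (a := d) (by rw [add_mul, one_mul]; omega)
      omega
    have h₀ : a ≤ q ∧ q ≤ a + m :=
      hwin (⟨q, hq⟩, σ ⟨0, hd⟩) ((mem_pathVertex hσ.1).2 (by simp only; omega))
    have hlo := Nat.mul_le_mul_right d h₀.1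
    refine ⟨by omega, ?_⟩
    rcases Nat.eq_zero_or_pos r with rfl | hr₀
    · simpa using Nat.mul_le_mul_right d h₀.2
    · have hq₁ : q + 1 < T := by
        have : q < T - 1 := Nat.lt_of_mul_lt_mul_right (a := d) (by omega)
        omega
      have h₁ : a ≤ q + 1 ∧ q + 1 ≤ a + m := hwin (⟨q + 1, hq₁⟩, σ ⟨0, hd⟩)
        ((mem_pathVertex hσ.1).2 (by simp only [add_mul, one_mul]; omega))
      have := Nat.mul_le_mul_right d h₁.2
      rw [add_mul, one_mul] at this
      omega
  · rintro ⟨h₁, h₂⟩ ⟨u, j⟩ hx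
    obtain ⟨s, rfl⟩ := hσ.2 j
    have hx := (mem_pathVertex hσ.1).1 hx
    have hlo : a < (u : ℕ) + 1 := Nat.lt_of_mul_lt_mul_right (a := d) (by rw [add_mul]; omega)
    have hhi : (u : ℕ) < a + m + 1 :=
      Nat.lt_of_mul_lt_mul_right (a := d) (by rw [add_mul]; omega)
    exact ⟨Nat.lt_succ_iff.1 hlo, Nat.lt_succ_iff.1 hhi⟩

theorem HasLowerLevels.isFreshPath_pathVertex (h : HasLowerLevels 𝒱 V0 σ) (hσ : Injective σ)
    (hd : 0 < d) : 𝒱.IsFreshPath d ((T - 1) * d) (pathVertex σ) := by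
  refine ⟨?_, fun i hi => pathVertex_exists_fresh hσ hi⟩
  ext p
  rw [h d hd le_rfl, mem_svineEdges, V0.hEzero d (Or.inr (by simp)), mem_connEdges, mem_image]
  simp only [Finset.notMem_empty, false_and, exists_false, false_or, mem_range]
  constructor
  · rintro ⟨t, r, ht, hr, rfl⟩
    refine ⟨t * d + r, ?_, by rw [pathVertex_mul_add hr, pathVertex_mul_add_succ hr]⟩
    have := Nat.mul_le_mul_right d (show t + 1 ≤ T - 1 by omega)
    rw [add_mul, one_mul] at this
    omega
  · rintro ⟨i, hi, rfl⟩
    have hr := Nat.mod_lt i hd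
    refine ⟨i / d, i % d, ?_, hr, ?_⟩
    · exact Nat.add_lt_of_lt_sub ((Nat.div_lt_iff_lt_mul hd).2 hi)
    · rw [← pathVertex_mul_add_succ hr, ← pathVertex_mul_add hr, Nat.div_add_mod']

theorem HasLowerLevels.exists_isFreshPath (h : HasLowerLevels 𝒱 V0 σ) (hσ : Bijective σ)
    (hd : 0 < d) (a m : ℕ) {k : ℕ} (hdk : d ≤ k) (hkT : k + 1 ≤ T * d) :
    ∃ v, 𝒱.IsFreshPath k (T * d - k) v ∧
      Set.OrdConnected
        {i | i ≤ T * d - k ∧ ∀ x ∈ v i, a ≤ (x.1 : ℕ) ∧ (x.1 : ℕ) ≤ a + m} := by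
  induction k, hdk using Nat.le_induction with
  | base =>
    have hN : T * d - d = (T - 1) * d := by rw [Nat.sub_mul, one_mul]
    have hT : 0 < T := Nat.pos_of_ne_zero (by rintro rfl; simp at hkT)
    refine ⟨pathVertex σ, hN ▸ h.isFreshPath_pathVertex hσ.1 hd, ⟨fun i hi l hl j hj => ?_⟩⟩
    simp only [Set.mem_ofPred_eq, Set.mem_Icc, hN] at hi hl hj ⊢
    obtain ⟨hi, hwi⟩ := hi
    obtain ⟨hl, hwl⟩ := hl
    rw [pathVertex_window_iff hσ hT hd hi] at hwi
    rw [pathVertex_window_iff hσ hT hd hl] at hwl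
    rw [pathVertex_window_iff hσ hT hd (by omega)]
    omega
  | succ k hdk ih =>
    obtain ⟨v, hv, hconv⟩ := ih (by omega)
    rw [show T * d - k = T * d - (k + 1) + 1 by omega] at hv hconv
    refine ⟨_, hv.succ (by omega) ?_, ordConnected_union_succ hconv⟩
    simp only [Fintype.card_prod, Fintype.card_fin]
    omega

end MVine

theorem mvine_restriction_is_vine_general {T d : ℕ}
    (V0 : RegularVine (Fin d))
    (σ : Fin d → Fin d) (hσ : Function.Bijective σ) (hc : Compatible V0 σ)
    (𝒱 : RegularVine (Fin T × Fin d))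
    (hfirst : ∀ k, 1 ≤ k → k ≤ d → 𝒱.E k = svineEdges T V0 σ σ k) :
    ∀ t m : ℕ, t + m + 1 ≤ T → ∀ k, 1 ≤ k → k + 1 ≤ (m + 1) * d →
      IsTreeOn (Vwin 𝒱 t m k) (Ewin 𝒱 t m k) := by
  intro t m hw k hk hkm
  have hlow : MVine.HasLowerLevels 𝒱 V0 σ := hfirst
  rcases Nat.lt_or_ge k d with hkd | hdk
  · exact hlow.isTreeOn_window_of_lt hc hw hk hkd
  · have hd : 0 < d := Nat.pos_of_ne_zero (by rintro rfl; simp at hkm)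
    have hkT : k + 1 ≤ T * d := hkm.trans (Nat.mul_le_mul_right d (by omega))
    obtain ⟨v, hv, hconv⟩ := hlow.exists_isFreshPath hσ hd t m hdk hkT
    exact hv.isTreeOn_restrict hk (by simpa using hkT) (by omega) _ hconv

/-- In the M-vine model (stationary vine with D-vine cross-sectional structure and
equal in- and out-vertex permutations), the restriction of the vine to any time
window `[t, t+m]` is again a vine: all levels of the restricted graph are trees. -/
theorem mvine_restriction_is_vine {T d : ℕ} (hT : 1 ≤ T) (hd : 1 ≤ d)
    (V0 : RegularVine (Fin d)) (hpath : IsPathOn (V0.V 1) (V0.E 1))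
    (σ : Fin d → Fin d) (hσ : Function.Bijective σ) (hc : Compatible V0 σ)
    (𝒱 : RegularVine (Fin T × Fin d)) (hstat : Stationary 𝒱)
    (hfirst : ∀ k, 1 ≤ k → k ≤ d → 𝒱.E k = svineEdges T V0 σ σ k) :
    ∀ t m : ℕ, t + m + 1 ≤ T → ∀ k, 1 ≤ k → k + 1 ≤ (m + 1) * d →
      IsTreeOn (Vwin 𝒱 t m k) (Ewin 𝒱 t m k) :=
  mvine_restriction_is_vine_general V0 σ hσ hc 𝒱 hfirst
end
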